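/- arXiv:math/0010137 — 3 statements merged into one kernel-verified Lean document; each statement's English description precedes it below -/
import Mathlib

section
/- For each multiple a = m*p of a prime p, the number of integers n ≥ 1 for which a is the least integer whose factorial is divisible by p^n equals the p-adic valuation of a, i.e., the value a is attained exactly v_p(a!) − v_p((a−1)!) = v_p(a) times in the sequence n ↦ S_p(n). -/
/-!
Since `b ↦ v_p(b!)` is monotone, `S_p` is its lower adjoint: for `n ≥ 1`, `S_p(n) ≤ b` iff
`n ≤ v_p(b!)`. Hence `S_p(n) = a` iff `v_p((a-1)!) < n ≤ v_p(a!)`, an interval of length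
`v_p(a!) - v_p((a-1)!) = v_p(a)`.
-/

open Nat

theorem Nat.factorization_factorial_sub_one_add (a p : ℕ) :
    (a - 1)!.factorization p + a.factorization p = (a !).factorization p := by
  rcases a with _ | a
  · simp
  · rw [Nat.add_sub_cancel, factorial_succ, factorization_mul (succ_ne_zero a)
      (factorial_ne_zero a), Finsupp.add_apply, add_comm]

theorem le_iff_le_factorization_factorial_of_isLeast {p n s : ℕ} (hp : p.Prime) (hn : 0 < n)
    (hs : IsLeast {b : ℕ | 0 < b ∧ p ^ n ∣ b !} s) (b : ℕ) :
    s ≤ b ↔ n ≤ (b !).factorization p := by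
  rw [← hp.pow_dvd_iff_le_factorization (factorial_ne_zero b)]
  refine ⟨fun hsb => hs.1.2.trans (factorial_dvd_factorial hsb), fun hdvd => hs.2 ⟨?_, hdvd⟩⟩
  refine Nat.pos_of_ne_zero fun hb => ?_
  subst hb
  have : p = 1 ∨ n = 0 := by simpa using hdvd
  have := hp.one_lt
  omega

theorem setOf_isLeast_factorial_dvd_eq_Ioc {p : ℕ} (hp : p.Prime) {S : ℕ → ℕ}
    (hS : ∀ n, IsLeast {b : ℕ | 0 < b ∧ p ^ n ∣ b !} (S n)) (a : ℕ) :
    {n : ℕ | 1 ≤ n ∧ S n = a} = Set.Ioc ((a - 1)!.factorization p) ((a !).factorization p) := by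
  ext n
  simp only [Set.mem_ofPred_eq, Set.mem_Ioc]
  by_cases hn : 0 < n
  · have hSpos := (hS n).1.1
    have hle := le_iff_le_factorization_factorial_of_isLeast hp hn (hS n)
    rw [← not_le, ← hle, ← hle]
    omega
  · omega

theorem stmt_5_general (p : ℕ) (hp : p.Prime) (a : ℕ)
    (S : ℕ → ℕ)
    (hS : ∀ n, IsLeast {b : ℕ | 0 < b ∧ p ^ n ∣ Nat.factorial b} (S n)) :
    {n : ℕ | 1 ≤ n ∧ S n = a}.ncard = (Nat.factorial a).factorization p
      - (Nat.factorial (a - 1)).factorization p ∧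
    (Nat.factorial a).factorization p - (Nat.factorial (a - 1)).factorization p
      = a.factorization p := by
  refine ⟨?_, ?_⟩
  · rw [setOf_isLeast_factorial_dvd_eq_Ioc hp hS, Set.ncard_Ioc_nat]
  · rw [← Nat.factorization_factorial_sub_one_add, Nat.add_sub_cancel_left]

theorem stmt_5 (p m : ℕ) (hp : p.Prime) (hm : 1 ≤ m) (a : ℕ) (ha : a = m * p)
    (S : ℕ → ℕ)
    (hS : ∀ n, IsLeast {b : ℕ | 0 < b ∧ p ^ n ∣ Nat.factorial b} (S n)) :
    {n : ℕ | 1 ≤ n ∧ S n = a}.ncard = (Nat.factorial a).factorization p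
      - (Nat.factorial (a - 1)).factorization p ∧
    (Nat.factorial a).factorization p - (Nat.factorial (a - 1)).factorization p
      = a.factorization p :=
  stmt_5_general p hp a S hS
end

section
/- Every positive integer A can be written uniquely as a sum of distinct terms from the sequence p_0 = 1, p_1 = 2, p_2 = 3, p_3 = 5, ... (1 followed by the primes), using the greedy algorithm: A = p_n + r where p_n ≤ A < p_{n+1}, with the greedy representation obtained by Bertrand's postulate guaranteeing each successive remainder is less than the subtracted term. -/
/-- The "prime base": `pb 0 = 1` and `pb (k+1)` is the `k`-th prime. -/
noncomputable def pb : ℕ → ℕ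
  | 0 => 1
  | k + 1 => Nat.nth Nat.Prime k

/-!
For `b n ≤ A < b (n + 1)` the largest term of any admissible
representation of `A` must be `b n`, and the rest represents `A - b n`; this gives uniqueness by
strong induction. For existence the remainder must satisfy `A - b n < b n`, so that the
representation of the remainder uses only indices below `n`; this is exactly the doubling bound
`b (n + 1) ≤ 2 * b n`, which for `1, 2, 3, 5, 7, …` is Bertrand's postulate.
-/

open Finset

/-- The partial-sum bound says that each `k ∈ S` is the index the greedy algorithm picks for the
partial sum ending at `k`. -/
def IsGreedyRep (b : ℕ → ℕ) (A : ℕ) (S : Finset ℕ) : Prop :=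
  A = ∑ k ∈ S, b k ∧ ∀ k ∈ S, ∑ j ∈ S.filter (· ≤ k), b j < b (k + 1)

section GreedyRep

variable {b : ℕ → ℕ} {A : ℕ} {S : Finset ℕ}

lemma StrictMono.exists_le_and_lt_apply_succ (hb : StrictMono b) (hA : b 0 ≤ A) :
    ∃ n, b n ≤ A ∧ A < b (n + 1) := by
  classical
  have hex : ∃ m, A < b m := ⟨A + 1, Nat.lt_of_lt_of_le (Nat.lt_succ_self A) hb.le_apply⟩
  have hfind : Nat.find hex ≠ 0 := fun h => (Nat.find_spec hex).not_ge (h ▸ hA)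
  obtain ⟨n, hn⟩ := Nat.exists_eq_add_one_of_ne_zero hfind
  exact ⟨n, not_lt.1 (Nat.find_min hex (by omega)), hn ▸ Nat.find_spec hex⟩

lemma isGreedyRep_zero_iff (hb : ∀ k, 0 < b k) : IsGreedyRep b 0 S ↔ S = ∅ := by
  constructor
  · rintro ⟨hsum, -⟩
    by_contra hS
    obtain ⟨k, hk⟩ := nonempty_iff_ne_empty.2 hS
    have := single_le_sum (fun j _ => Nat.zero_le (b j)) hk
    have := hb k
    omega
  · rintro rfl
    simp [IsGreedyRep]

lemma IsGreedyRep.lt_of_mem (hb : StrictMono b) (hS : IsGreedyRep b A S) {n k : ℕ}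
    (hA : A < b n) (hk : k ∈ S) : k < n :=
  hb.lt_iff_lt.1 <| (hS.1 ▸ single_le_sum (fun j _ => Nat.zero_le (b j)) hk).trans_lt hA

lemma IsGreedyRep.insert_of_lt (hb : StrictMono b) {r n : ℕ} {T : Finset ℕ}
    (hT : IsGreedyRep b r T) (hr : r < b n) (hn : b n + r < b (n + 1)) :
    IsGreedyRep b (b n + r) (insert n T) := by
  have hlt : ∀ k ∈ T, k < n := fun k hk => hT.lt_of_mem hb hr hk
  have hnT : n ∉ T := fun h => (hlt n h).false
  refine ⟨by rw [sum_insert hnT, hT.1], fun k hk => ?_⟩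
  rcases mem_insert.1 hk with rfl | hkT
  · have hall : (insert k T).filter (· ≤ k) = insert k T :=
      filter_true_of_mem fun x hx => (mem_insert.1 hx).elim le_of_eq fun hx => (hlt x hx).le
    rwa [hall, sum_insert hnT, ← hT.1]
  · rw [filter_insert, if_neg (by simpa using hlt k hkT)]
    exact hT.2 k hkT

/-- The index `n` with `b n ≤ A < b (n + 1)` is forced to be the largest element of `S`. -/
lemma IsGreedyRep.erase (hb : StrictMono b) (hS : IsGreedyRep b A S) {n : ℕ} (hA : 0 < A)
    (hnA : b n ≤ A) (hAn : A < b (n + 1)) : n ∈ S ∧ IsGreedyRep b (A - b n) (S.erase n) := by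
  have hne : S.Nonempty := nonempty_iff_ne_empty.2 fun h => by simp [h, hS.1] at hA
  set m := S.max' hne
  have hmS : m ∈ S := S.max'_mem hne
  have hAm : A < b (m + 1) := by
    have hall : S.filter (· ≤ m) = S := filter_true_of_mem fun x hx => S.le_max' x hx
    simpa [hall, ← hS.1] using hS.2 m hmS
  have hmA : b m ≤ A := hS.1 ▸ single_le_sum (fun j _ => Nat.zero_le (b j)) hmS
  have hmn : m = n := by
    have h₁ := hb.lt_iff_lt.1 (hmA.trans_lt hAn)
    have h₂ := hb.lt_iff_lt.1 (hnA.trans_lt hAm)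
    omega
  subst hmn
  have hlt : ∀ k ∈ S.erase m, k < m := fun k hk =>
    lt_of_le_of_ne (S.le_max' k (mem_of_mem_erase hk)) (ne_of_mem_erase hk)
  refine ⟨hmS, ?_, fun k hk => ?_⟩
  · have := add_sum_erase S b hmS
    have := hS.1
    omega
  · have hfilter : (S.erase m).filter (· ≤ k) = S.filter (· ≤ k) := by
      rw [filter_erase, erase_eq_of_notMem (by simpa using fun _ => hlt k hk)]
    rw [hfilter]
    exact hS.2 k (mem_of_mem_erase hk)

theorem existsUnique_isGreedyRep (hb : StrictMono b) (h0 : b 0 = 1)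
    (h2 : ∀ n, b (n + 1) ≤ 2 * b n) (A : ℕ) : ∃! S, IsGreedyRep b A S := by
  have hpos : ∀ k, 0 < b k := fun k => by
    have := hb.monotone (Nat.zero_le k)
    omega
  induction A using Nat.strong_induction_on with
  | _ A ih =>
  rcases Nat.eq_zero_or_pos A with rfl | hA
  · exact ⟨∅, (isGreedyRep_zero_iff hpos).2 rfl, fun _ => (isGreedyRep_zero_iff hpos).1⟩
  obtain ⟨n, hnA, hAn⟩ := hb.exists_le_and_lt_apply_succ (show b 0 ≤ A by omega)
  have hr : A - b n < b n := by have := h2 n; omega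
  obtain ⟨T, hT, hTuniq⟩ := ih (A - b n) (by have := hpos n; omega)
  have hAeq : b n + (A - b n) = A := by omega
  refine ⟨insert n T, hAeq ▸ hT.insert_of_lt hb hr (by omega), fun S hS => ?_⟩
  obtain ⟨hnS, hSerase⟩ := hS.erase hb hA hnA hAn
  rw [← hTuniq _ hSerase, insert_erase hnS]

end GreedyRep

lemma pb_strictMono : StrictMono pb := by
  refine strictMono_nat_of_lt_succ fun n => ?_
  cases n with
  | zero => simp [pb, Nat.nth_prime_zero_eq_two]
  | succ k => exact (Nat.nth_lt_nth Nat.infinite_setOfPred_prime).2 k.lt_succ_self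

lemma pb_succ_le_two_mul (n : ℕ) : pb (n + 1) ≤ 2 * pb n := by
  cases n with
  | zero => simp [pb, Nat.nth_prime_zero_eq_two]
  | succ k =>
    obtain ⟨q, hq, hlt, hle⟩ :=
      Nat.exists_prime_lt_and_le_two_mul _ (Nat.prime_nth_prime k).ne_zero
    have : Nat.nth Nat.Prime (k + 1) ≤ q :=
      not_lt.1 fun h => (Nat.le_nth_of_lt_nth_succ h hq).not_gt hlt
    exact this.trans hle

theorem stmt_9_general (A : ℕ) :
    ∃! S : Finset ℕ, A = ∑ k ∈ S, pb k ∧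
      ∀ k ∈ S, (∑ j ∈ S.filter (· ≤ k), pb j) < pb (k + 1) :=
  existsUnique_isGreedyRep pb_strictMono rfl pb_succ_le_two_mul A

theorem stmt_9 (A : ℕ) (hA : 0 < A) :
    ∃! S : Finset ℕ, A = ∑ k ∈ S, pb k ∧
      ∀ k ∈ S, (∑ j ∈ S.filter (· ≤ k), pb j) < pb (k + 1) :=
  stmt_9_general A
end

section
/- For m ≥ 3, the product of all integers c with 1 ≤ c < m and gcd(c, m) = 1 is congruent to ±1 modulo m; specifically it is ≡ −1 (mod m) if m = 4, p^k, or 2p^k for an odd prime p, and ≡ 1 (mod m) otherwise (Gauss's generalization of Wilson's theorem). -/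
/-!
Pairing every unit with its inverse leaves the product of the square roots of `1`. If `c ≠ 1` is
one of them, pairing `x` with `c * x` shows that this product is trivial modulo `⟨c⟩`, i.e. lies in
`{1, c}`. So it is `1` as soon as there are two distinct square roots `a, b ≠ 1`, and it is `-1`
when `±1` are the only ones, as in a cyclic group. By `ZMod.isCyclic_units_iff`, `(ZMod m)ˣ` is
cyclic exactly for `m = 4, p ^ k, 2 * p ^ k`; for any other `m ≥ 3` either `4 ∣ m`, `m > 4`, and
`m / 2 + 1` is a third square root of `1`, or `m = d * e` with coprime `d, e ≥ 3` and the
Chinese-remainder lift of `(-1, 1)` is one.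
-/

open Finset

section CommGroup

variable {G : Type*} [CommGroup G]

theorem eq_one_or_eq_of_mem_zpowers {c x : G} (hc : c ^ 2 = 1) (hx : x ∈ Subgroup.zpowers c) :
    x = 1 ∨ x = c := by
  obtain ⟨k, rfl⟩ := Subgroup.mem_zpowers_iff.mp hx
  have hc' : c ^ (2 : ℤ) = 1 := by exact_mod_cast hc
  rw [← Int.mul_ediv_add_emod k 2, zpow_add, zpow_mul, hc', one_zpow, one_mul]
  rcases Int.emod_two_eq_zero_or_one k with h | h <;> simp [h]

variable [Fintype G] [DecidableEq G]

theorem prod_univ_eq_prod_filter_sq_eq_one :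
    ∏ x : G, x = ∏ x with x ^ 2 = 1, x := by
  rw [← prod_filter_mul_prod_filter_not univ (fun x : G => x ^ 2 = 1), mul_eq_left]
  refine prod_involution (fun x _ => x⁻¹) (fun x _ => mul_inv_cancel x) ?_ (by simp)
    (fun x _ => inv_inv x)
  intro x hx _ hinv
  rw [mem_filter, pow_two] at hx
  exact hx.2 (by simpa [hinv] using mul_inv_cancel x)

theorem prod_filter_sq_eq_one_mem_zpowers {c : G} (hc : c ^ 2 = 1) (hc1 : c ≠ 1) :
    ∏ x with x ^ 2 = 1, x ∈ Subgroup.zpowers c := by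
  rw [← QuotientGroup.eq_one_iff, QuotientGroup.mk_prod]
  refine prod_involution (fun x _ => c * x) (fun x hx => ?_) (fun x _ _ => by simpa using hc1)
    (fun x hx => ?_) (fun x _ => by rw [← mul_assoc, ← pow_two, hc, one_mul])
  · rw [← QuotientGroup.mk_mul, QuotientGroup.eq_one_iff, mul_left_comm, ← pow_two,
      (mem_filter.mp hx).2, mul_one]
    exact Subgroup.mem_zpowers c
  · simpa [mul_pow, hc] using hx

theorem prod_univ_eq_one_of_sq_eq_one {a b : G} (ha : a ^ 2 = 1) (hb : b ^ 2 = 1) (ha1 : a ≠ 1)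
    (hb1 : b ≠ 1) (hab : a ≠ b) : ∏ x : G, x = 1 := by
  rw [prod_univ_eq_prod_filter_sq_eq_one]
  rcases eq_one_or_eq_of_mem_zpowers ha (prod_filter_sq_eq_one_mem_zpowers ha ha1) with h | h
  · exact h
  rcases eq_one_or_eq_of_mem_zpowers hb (prod_filter_sq_eq_one_mem_zpowers hb hb1) with h' | h'
  · exact h'
  exact absurd (h.symm.trans h') hab

theorem IsCyclic.prod_univ_eq_of_sq_eq_one [IsCyclic G] {a : G} (ha : a ^ 2 = 1) (ha1 : a ≠ 1) :
    ∏ x : G, x = a := by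
  have hsub : {1, a} ⊆ ({x | x ^ 2 = 1} : Finset G) := by
    simp [insert_subset_iff, ha]
  have hcard : #({x | x ^ 2 = 1} : Finset G) ≤ #{1, a} := by
    rw [card_pair ha1.symm]
    exact IsCyclic.card_pow_eq_one_le two_pos
  rw [prod_univ_eq_prod_filter_sq_eq_one, ← eq_of_subset_of_card_le hsub hcard,
    prod_pair ha1.symm, one_mul]

end CommGroup

namespace Nat

theorem exists_coprime_mul_eq_of_not_isPrimePow {n : ℕ} (hn : 2 ≤ n) (h : ¬IsPrimePow n) :
    ∃ a b, a.Coprime b ∧ 1 < a ∧ 1 < b ∧ a * b = n := by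
  induction n using Nat.recOnPosPrimePosCoprime with
  | prime_pow p k hp hk => exact absurd ((isPrimePow_nat_iff _).mpr ⟨p, k, hp, hk, rfl⟩) h
  | zero => omega
  | one => omega
  | coprime a b ha hb hab => exact ⟨a, b, hab, ha, hb, rfl⟩

theorem four_dvd_or_exists_coprime_mul_eq {m : ℕ} (hm : 3 ≤ m)
    (hgood : ¬(m = 4 ∨ (∃ p k : ℕ, p.Prime ∧ Odd p ∧ 1 ≤ k ∧ m = p ^ k) ∨
      (∃ p k : ℕ, p.Prime ∧ Odd p ∧ 1 ≤ k ∧ m = 2 * p ^ k))) :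
    (4 ∣ m ∧ 4 < m) ∨ ∃ d e, d.Coprime e ∧ 3 ≤ d ∧ 3 ≤ e ∧ d * e = m := by
  by_cases h4 : 4 ∣ m
  · exact .inl ⟨h4, by omega⟩
  right
  obtain ⟨t, ht, hmt⟩ : ∃ t, Odd t ∧ (m = t ∨ m = 2 * t) := by
    rcases Nat.even_or_odd m with ⟨t, rfl⟩ | hodd
    · refine ⟨t, Nat.odd_iff.mpr ?_, .inr (two_mul t).symm⟩
      omega
    · exact ⟨m, hodd, .inl rfl⟩
  have hpow : ¬IsPrimePow t := by
    rw [isPrimePow_nat_iff]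
    rintro ⟨p, k, hp, hk, rfl⟩
    have hpodd : Odd p := ht.of_dvd_nat (dvd_pow_self p hk.ne')
    exact hgood (.inr (hmt.imp (⟨p, k, hp, hpodd, hk, ·⟩) (⟨p, k, hp, hpodd, hk, ·⟩)))
  obtain ⟨a, b, hab, ha, hb, rfl⟩ := exists_coprime_mul_eq_of_not_isPrimePow (by omega) hpow
  have three_le : ∀ x, x ∣ a * b → 1 < x → 3 ≤ x := fun x hx hx1 => by
    have := Nat.odd_iff.mp (ht.of_dvd_nat hx)
    omega
  have ha3 := three_le a (dvd_mul_right a b) ha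
  have hb3 := three_le b (dvd_mul_left b a) hb
  rcases hmt with rfl | rfl
  · exact ⟨a, b, hab, ha3, hb3, rfl⟩
  · refine ⟨2 * a, b, ?_, by omega, hb3, by ring⟩
    exact (Nat.coprime_two_left.mpr (ht.of_dvd_nat (dvd_mul_left b a))).mul_left hab

end Nat

namespace ZMod

theorem natCast_prod_coprime_eq_prod_units (m : ℕ) [NeZero m] :
    ((∏ c ∈ range m with c.Coprime m, c : ℕ) : ZMod m) =
      ((∏ x : (ZMod m)ˣ, x : (ZMod m)ˣ) : ZMod m) := by
  push_cast
  symm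
  refine prod_bij (fun u _ => (u : ZMod m).val) (fun u _ => ?_) (fun u _ v _ h => ?_)
    (fun c hc => ?_) (fun u _ => ?_)
  · simpa using ⟨val_lt _, val_coe_unit_coprime u⟩
  · exact Units.ext (val_injective m h)
  · simp only [mem_filter, mem_range] at hc
    exact ⟨unitOfCoprime c hc.2, mem_univ _, by simp [val_cast_of_lt hc.1]⟩
  · simp

theorem isCyclic_units_iff_of_three_le {m : ℕ} (hm : 3 ≤ m) :
    IsCyclic (ZMod m)ˣ ↔ m = 4 ∨ (∃ p k : ℕ, p.Prime ∧ Odd p ∧ 1 ≤ k ∧ m = p ^ k) ∨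
      (∃ p k : ℕ, p.Prime ∧ Odd p ∧ 1 ≤ k ∧ m = 2 * p ^ k) := by
  rw [isCyclic_units_iff]
  grind

theorem exists_nontrivial_sqrt_one_of_four_dvd {m : ℕ} (h4 : 4 ∣ m) (hm : 4 < m) :
    ∃ u : ZMod m, u ^ 2 = 1 ∧ u ≠ 1 ∧ u ≠ -1 := by
  obtain ⟨k, rfl⟩ := h4
  have hk : (4 * k : ZMod (4 * k)) = 0 := by exact_mod_cast natCast_self (4 * k)
  refine ⟨2 * k + 1, by linear_combination (k + 1 : ZMod (4 * k)) * hk, fun h => ?_, fun h => ?_⟩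
  · have h2k : ((2 * k : ℕ) : ZMod (4 * k)) = 0 := by push_cast; linear_combination h
    have := Nat.le_of_dvd (by omega) ((natCast_eq_zero_iff _ _).mp h2k)
    omega
  · have h2k : ((2 * k + 2 : ℕ) : ZMod (4 * k)) = 0 := by push_cast; linear_combination h
    have := Nat.le_of_dvd (by omega) ((natCast_eq_zero_iff _ _).mp h2k)
    omega

theorem exists_nontrivial_sqrt_one_of_coprime {d e : ℕ} (hde : d.Coprime e) (hd : 3 ≤ d)
    (he : 3 ≤ e) : ∃ u : ZMod (d * e), u ^ 2 = 1 ∧ u ≠ 1 ∧ u ≠ -1 := by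
  have : Fact (2 < d) := ⟨hd⟩
  have : Fact (2 < e) := ⟨he⟩
  let E := chineseRemainder hde
  refine ⟨E.symm (-1, 1), E.injective ?_, fun h => ?_, fun h => ?_⟩
  · simp
  · exact neg_one_ne_one (by simpa using congrArg (Prod.fst ∘ E) h)
  · exact neg_one_ne_one (by simpa using congrArg (Prod.snd ∘ E) h : (1 : ZMod e) = -1).symm

theorem exists_nontrivial_sqrt_one_of_not_isCyclic {m : ℕ} (h : ¬IsCyclic (ZMod m)ˣ) :
    ∃ u : ZMod m, u ^ 2 = 1 ∧ u ≠ 1 ∧ u ≠ -1 := by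
  have hm : 3 ≤ m := by
    by_contra hm
    exact h ((isCyclic_units_iff m).mpr (by omega))
  rw [isCyclic_units_iff_of_three_le hm] at h
  rcases Nat.four_dvd_or_exists_coprime_mul_eq hm h with ⟨h4, hm4⟩ | ⟨d, e, hde, hd, he, rfl⟩
  · exact exists_nontrivial_sqrt_one_of_four_dvd h4 hm4
  · exact exists_nontrivial_sqrt_one_of_coprime hde hd he

theorem prod_units_eq_neg_one {m : ℕ} [NeZero m] [IsCyclic (ZMod m)ˣ] (hm : 2 < m) :
    ∏ x : (ZMod m)ˣ, x = -1 := by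
  have : Fact (2 < m) := ⟨hm⟩
  refine IsCyclic.prod_univ_eq_of_sq_eq_one (by simp) fun h => neg_one_ne_one (n := m) ?_
  simpa using congrArg Units.val h

theorem prod_units_eq_one {m : ℕ} [NeZero m] (hm : 2 < m) (h : ¬IsCyclic (ZMod m)ˣ) :
    ∏ x : (ZMod m)ˣ, x = 1 := by
  have : Fact (2 < m) := ⟨hm⟩
  obtain ⟨u, hu, hu1, hun⟩ := exists_nontrivial_sqrt_one_of_not_isCyclic h
  let b : (ZMod m)ˣ := Units.mkOfMulEqOne u u (by rw [← pow_two, hu])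
  refine prod_univ_eq_one_of_sq_eq_one (a := -1) (b := b) (by simp) (Units.ext hu)
    (fun h1 => neg_one_ne_one (n := m) ?_) (fun hb => hu1 (congrArg Units.val hb))
    (fun hb => hun ?_)
  · simpa using congrArg Units.val h1
  · simpa [b] using (congrArg Units.val hb).symm

end ZMod

theorem stmt_14 (m : ℕ) (hm : 3 ≤ m) (P : ℕ)
    (hP : P = ∏ c ∈ (Finset.range m).filter (fun c => Nat.Coprime c m), c) :
    ((P : ZMod m) = -1 ∨ (P : ZMod m) = 1) ∧
    ((m = 4 ∨ (∃ p k : ℕ, p.Prime ∧ Odd p ∧ 1 ≤ k ∧ m = p ^ k) ∨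
        (∃ p k : ℕ, p.Prime ∧ Odd p ∧ 1 ≤ k ∧ m = 2 * p ^ k)) →
      (P : ZMod m) = -1) ∧
    (¬(m = 4 ∨ (∃ p k : ℕ, p.Prime ∧ Odd p ∧ 1 ≤ k ∧ m = p ^ k) ∨
        (∃ p k : ℕ, p.Prime ∧ Odd p ∧ 1 ≤ k ∧ m = 2 * p ^ k)) →
      (P : ZMod m) = 1) := by
  have : NeZero m := ⟨by omega⟩
  rw [← ZMod.isCyclic_units_iff_of_three_le hm, hP, ZMod.natCast_prod_coprime_eq_prod_units]
  have cyclic (_ : IsCyclic (ZMod m)ˣ) : ((∏ x : (ZMod m)ˣ, x : (ZMod m)ˣ) : ZMod m) = -1 := by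
    simp [ZMod.prod_units_eq_neg_one hm]
  have noncyclic (h : ¬IsCyclic (ZMod m)ˣ) :
      ((∏ x : (ZMod m)ˣ, x : (ZMod m)ˣ) : ZMod m) = 1 := by
    simp [ZMod.prod_units_eq_one hm h]
  exact ⟨(em _).imp cyclic noncyclic, cyclic, noncyclic⟩
end
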